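/- Let ψ : ℕ → ℕ be defined by ψ(n) = max over all x with 2^n ≤ x < 2^{n+1} of the least k such that Code.evaln k (Code.ofNatCode (K x)) 0 = some x. Then ψ grows faster than any computable function: for every computable g : ℕ → ℕ there exist infinitely many n with ψ(n) > g(n). -/

import Mathlib

open scoped Classical
open Nat.Partrec Nat.Partrec.Code

theorem K_exists (x : ℕ) : ∃ e : ℕ, (Code.ofNatCode e).eval 0 = Part.some x :=
  ⟨Code.encodeCode (Code.const x), by
    rw [← Code.encodeCode_eq, ← Code.ofNatCode_eq, Denumerable.ofNat_encode]
    exact Code.eval_const x 0⟩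

/-- Kolmogorov complexity: the least index `e` such that program `e` on input `0` outputs `x`. -/
noncomputable def K (x : ℕ) : ℕ := Nat.find (K_exists x)

theorem T_exists (x : ℕ) : ∃ k : ℕ, Code.evaln k (Code.ofNatCode (K x)) 0 = some x := by
  have h : x ∈ (Code.ofNatCode (K x)).eval 0 := by
    have := Nat.find_spec (K_exists x)
    rw [show K x = Nat.find (K_exists x) from rfl, this]
    exact Part.mem_some x
  obtain ⟨k, hk⟩ := Code.evaln_complete.mp h
  exact ⟨k, hk⟩

/-- The running time of the shortest program for `x`. -/
noncomputable def T (x : ℕ) : ℕ := Nat.find (T_exists x)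

/-- `ψ n` : the maximal running time of a shortest program, over strings of length `n`. -/
noncomputable def ψ (n : ℕ) : ℕ := (Finset.Ico (2 ^ n) (2 ^ (n + 1))).sup T

/-! If `ψ n ≤ g n` for all large `n`, the running time `T x` of the shortest program for `x`
is eventually bounded by the computable function `x ↦ g (log₂ x)`. A Berry-paradox argument
rules out any computable bound `B`: by Kleene's recursion theorem there is a program `c` that
outputs the least `x ≥ a` which no program of index `≤ ⌜c⌝` outputs within `B x` steps (such
`x` exist since `K` is injective, hence unbounded). Then `K x ≤ ⌜c⌝`, yet the shortest program
for `x` halts within `T x ≤ B x` steps. -/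

open Filter Encodable

theorem computable_nat_log_two : Computable (Nat.log 2) := by
  -- `Nat.log 2 x` is the least `k` with `x < 2 ^ (k + 1)`.
  have hp : Primrec₂ fun x k : ℕ => decide (x < 2 ^ (k + 1)) :=
    (Primrec.nat_lt.comp Primrec.fst
      ((Primrec₂.unpaired'.1 Nat.Primrec.pow).comp (Primrec.const 2)
        (Primrec.succ.comp Primrec.snd))).decide
  refine (_root_.Partrec.rfind (p := fun x k => Part.some _) hp.to_comp.partrec₂).of_eq_tot
    fun x => Nat.mem_rfind.2 ⟨?_, fun {m} hm => ?_⟩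
  · simpa using Nat.lt_pow_succ_log_self one_lt_two x
  · have hx : x ≠ 0 := by rintro rfl; simp at hm
    simpa using (Nat.pow_le_pow_right two_pos hm).trans (Nat.pow_log_le_self 2 hx)

theorem K_spec (x : ℕ) : (ofNatCode (K x)).eval 0 = Part.some x :=
  Nat.find_spec (K_exists x)

theorem K_le_encode {c : Code} {x : ℕ} (h : c.eval 0 = Part.some x) : K x ≤ encode c :=
  Nat.find_min' (K_exists x) (by rwa [← ofNatCode_eq, Denumerable.ofNat_encode])

theorem K_injective : Function.Injective K := fun a b h =>
  Part.some_inj.1 <| (K_spec a).symm.trans (h ▸ K_spec b)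

theorem evaln_ne_of_lt_K {e x : ℕ} (h : e < K x) (t : ℕ) :
    evaln t (ofNatCode e) 0 ≠ some x := fun hx =>
  Nat.find_min (K_exists x) h (Part.eq_some_iff.2 (evaln_sound hx))

theorem evaln_K_of_T_le {x t : ℕ} (h : T x ≤ t) : evaln t (ofNatCode (K x)) 0 = some x :=
  evaln_mono h (Nat.find_spec (T_exists x))

theorem T_le_ψ_log {x : ℕ} (hx : x ≠ 0) : T x ≤ ψ (Nat.log 2 x) :=
  Finset.le_sup <| Finset.mem_Ico.2
    ⟨Nat.pow_log_le_self 2 hx, Nat.lt_pow_succ_log_self one_lt_two x⟩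

theorem primrecRel_forall_lt_evaln_ne :
    PrimrecRel fun (m : ℕ) (p : ℕ × ℕ) =>
      ∀ e < m, evaln p.1 (ofNatCode e) 0 ≠ some p.2 := by
  have hR : PrimrecRel fun e (p : ℕ × ℕ) => evaln p.1 (ofNatCode e) 0 ≠ some p.2 := by
    refine .not ?_
    rw [← ofNatCode_eq]
    exact Primrec.eq.comp
      (primrec_evaln.comp (((Primrec.fst.comp Primrec.snd).pair
        ((Primrec.ofNat Code).comp Primrec.fst)).pair (Primrec.const 0)))
      (Primrec.option_some.comp (Primrec.snd.comp Primrec.snd))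
  exact (hR.forall_mem_list.comp (Primrec.list_range.comp Primrec.fst) Primrec.snd).of_eq
    (by simp)

theorem exists_code_eval_eq_and_forall_le_encode_evaln_ne {B : ℕ → ℕ} (hB : Computable B)
    (a : ℕ) :
    ∃ (c : Code) (x : ℕ), c.eval 0 = Part.some x ∧ a ≤ x ∧
      ∀ e ≤ encode c, evaln (B x) (ofNatCode e) 0 ≠ some x := by
  let p (c : Code) (x : ℕ) : Bool := decide (a ≤ x ∧
    ∀ e < encode c + 1, evaln (B x) (ofNatCode e) 0 ≠ some x)
  have hp : Computable₂ p :=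
    (Primrec.and.to_comp.comp (Primrec.nat_le.comp (Primrec.const a) Primrec.snd).decide.to_comp
      (primrecRel_forall_lt_evaln_ne.decide.to_comp.comp
        (Computable.succ.comp (Computable.encode.comp Computable.fst))
        ((hB.comp Computable.snd).pair Computable.snd))).of_eq (by simp [p])
  obtain ⟨c, hc⟩ := fixed_point₂ (f := fun c _ => Nat.rfind (p c))
    ((_root_.Partrec.rfind hp.partrec₂).comp Computable.fst)
  obtain ⟨y, hKy, hay⟩ := ((K_injective.nat_tendsto_atTop.eventually_ge_atTop
    (encode c + 1)).and (eventually_ge_atTop a)).exists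
  have hpy : p c y := decide_eq_true ⟨hay, fun e he => evaln_ne_of_lt_K (he.trans_le hKy) _⟩
  obtain ⟨x, hx, -⟩ := Nat.rfind_min' hpy
  have hpx : p c x := by simpa using Nat.rfind_spec hx
  refine ⟨c, x, by rw [hc]; exact Part.eq_some_iff.2 hx, ?_⟩
  simpa only [p, decide_eq_true_eq, Nat.lt_succ_iff] using hpx

theorem frequently_lt_T {B : ℕ → ℕ} (hB : Computable B) : ∃ᶠ x in atTop, B x < T x := by
  refine frequently_atTop.2 fun a => ?_
  obtain ⟨c, x, hcx, hax, hx⟩ := exists_code_eval_eq_and_forall_le_encode_evaln_ne hB a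
  exact ⟨x, hax, lt_of_not_ge fun hT => hx (K x) (K_le_encode hcx) (evaln_K_of_T_le hT)⟩

theorem psi_grows_faster_than_any_computable :
    ∀ g : ℕ → ℕ, Computable g → ∀ N : ℕ, ∃ n : ℕ, N ≤ n ∧ g n < ψ n := by
  intro g hg N
  obtain ⟨x, hx, hgx⟩ :=
    frequently_atTop.1 (frequently_lt_T (hg.comp computable_nat_log_two)) (2 ^ N)
  have hx0 : x ≠ 0 := (Nat.two_pow_pos N).trans_le hx |>.ne'
  exact ⟨Nat.log 2 x, (Nat.le_log_iff_pow_le one_lt_two hx0).2 hx,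
    hgx.trans_le (T_le_ψ_log hx0)⟩
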